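/- arXiv:1204.5166 — 7 statements merged into one kernel-verified Lean document; each statement's English description precedes it below -/
import Mathlib

section
/- There exists a Butson-type complex Hadamard matrix BH(19,6): that is, there exists a 19×19 complex matrix H, all of whose entries are sixth roots of unity, such that H multiplied by its conjugate transpose equals 19 times the 19×19 identity matrix. -/
open Matrix Complex

noncomputable def om : ℂ := ⟨1/2, Real.sqrt 3 / 2⟩

lemma om_sq : om ^ 2 = om - 1 := by
  have h3 : Real.sqrt 3 * Real.sqrt 3 = 3 := Real.mul_self_sqrt (by norm_num)
  rw [pow_two]
  apply Complex.ext <;>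
    simp [om, Complex.mul_re, Complex.mul_im, Complex.sub_re, Complex.sub_im] <;> nlinarith [h3]

lemma om_cube : om ^ 3 = -1 := by linear_combination (om + 1) * om_sq

lemma om_six : om ^ 6 = 1 := by
  have : om ^ 6 = (om ^ 3) ^ 2 := by ring
  rw [this, om_cube]; ring

lemma om_conj : (starRingEnd ℂ) om = 1 - om := by
  apply Complex.ext <;> simp [om] <;> norm_num

/-- exponent table of the Butson matrix (powers of a primitive sixth root). -/
def Etbl : Matrix (Fin 19) (Fin 19) ℕ :=
  !![0, 0, 0, 0, 0, 0, 0, 0, 0, 0, 0, 0, 0, 0, 0, 0, 0, 0, 0;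
  0, 5, 1, 3, 1, 3, 1, 5, 5, 5, 5, 1, 3, 3, 1, 5, 3, 2, 3;
  0, 5, 5, 1, 3, 1, 3, 1, 5, 5, 1, 3, 3, 1, 5, 3, 2, 3, 5;
  0, 5, 5, 5, 1, 3, 1, 3, 1, 5, 3, 3, 1, 5, 3, 2, 3, 5, 1;
  0, 5, 5, 5, 5, 1, 3, 1, 3, 1, 3, 1, 5, 3, 2, 3, 5, 1, 3;
  0, 1, 5, 5, 5, 5, 1, 3, 1, 3, 1, 5, 3, 2, 3, 5, 1, 3, 3;
  0, 3, 1, 5, 5, 5, 5, 1, 3, 1, 5, 3, 2, 3, 5, 1, 3, 3, 1;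
  0, 1, 3, 1, 5, 5, 5, 5, 1, 3, 3, 2, 3, 5, 1, 3, 3, 1, 5;
  0, 3, 1, 3, 1, 5, 5, 5, 5, 1, 2, 3, 5, 1, 3, 3, 1, 5, 3;
  0, 1, 3, 1, 3, 1, 5, 5, 5, 5, 3, 5, 1, 3, 3, 1, 5, 3, 2;
  0, 5, 1, 3, 3, 1, 5, 3, 2, 3, 5, 1, 3, 1, 3, 1, 5, 5, 5;
  0, 1, 3, 3, 1, 5, 3, 2, 3, 5, 5, 5, 1, 3, 1, 3, 1, 5, 5;
  0, 3, 3, 1, 5, 3, 2, 3, 5, 1, 5, 5, 5, 1, 3, 1, 3, 1, 5;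
  0, 3, 1, 5, 3, 2, 3, 5, 1, 3, 5, 5, 5, 5, 1, 3, 1, 3, 1;
  0, 1, 5, 3, 2, 3, 5, 1, 3, 3, 1, 5, 5, 5, 5, 1, 3, 1, 3;
  0, 5, 3, 2, 3, 5, 1, 3, 3, 1, 3, 1, 5, 5, 5, 5, 1, 3, 1;
  0, 3, 2, 3, 5, 1, 3, 3, 1, 5, 1, 3, 1, 5, 5, 5, 5, 1, 3;
  0, 2, 3, 5, 1, 3, 3, 1, 5, 3, 3, 1, 3, 1, 5, 5, 5, 5, 1;
  0, 3, 5, 1, 3, 3, 1, 5, 3, 2, 1, 3, 1, 3, 1, 5, 5, 5, 5]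

/-- canonical representative of `om ^ e` in `ℤ × ℤ` (coeffs of `1` and `om`). -/
def P (e : ℕ) : ℤ × ℤ :=
  match e % 6 with
  | 0 => (1, 0)
  | 1 => (0, 1)
  | 2 => (-1, 1)
  | 3 => (-1, 0)
  | 4 => (0, -1)
  | _ => (1, -1)

def emul (x y : ℤ × ℤ) : ℤ × ℤ := (x.1 * y.1 - x.2 * y.2, x.1 * y.2 + x.2 * y.1 + x.2 * y.2)

def estar (x : ℤ × ℤ) : ℤ × ℤ := (x.1 + x.2, -x.2)

noncomputable def phi : ℤ × ℤ →+ ℂ where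
  toFun p := (p.1 : ℂ) + (p.2 : ℂ) * om
  map_zero' := by simp
  map_add' x y := by simp only [Prod.fst_add, Prod.snd_add]; push_cast; ring

lemma phi_apply (p : ℤ × ℤ) : phi p = (p.1 : ℂ) + (p.2 : ℂ) * om := rfl

lemma phi_mul (x y : ℤ × ℤ) : phi (emul x y) = phi x * phi y := by
  simp only [phi_apply, emul]
  push_cast
  linear_combination (-(x.2 * y.2) : ℂ) * om_sq

lemma phi_star (x : ℤ × ℤ) : phi (estar x) = (starRingEnd ℂ) (phi x) := by
  simp only [phi_apply, estar, map_add, _root_.map_mul, map_intCast, om_conj]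
  push_cast
  ring

lemma om_pow_mod (e : ℕ) : om ^ e = om ^ (e % 6) := by
  conv_lhs => rw [← Nat.div_add_mod e 6]
  rw [pow_add, pow_mul, om_six, one_pow, one_mul]

lemma phi_P (e : ℕ) : phi (P e) = om ^ e := by
  rw [om_pow_mod]
  have h : e % 6 = 0 ∨ e % 6 = 1 ∨ e % 6 = 2 ∨ e % 6 = 3 ∨ e % 6 = 4 ∨ e % 6 = 5 := by omega
  rcases h with h | h | h | h | h | h <;> simp only [P, h] <;> simp only [phi_apply] <;> push_cast
  · simp
  · simp
  · linear_combination -om_sq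
  · linear_combination -om_cube
  · linear_combination -om * om_cube
  · linear_combination om_sq - om ^ 2 * om_cube

def M : Fin 19 → Fin 19 → ℤ × ℤ := fun i j => P (Etbl i j)

lemma key : ∀ i j : Fin 19,
    (∑ k : Fin 19, emul (M i k) (estar (M j k))) =
      if i = j then ((19, 0) : ℤ × ℤ) else 0 := by decide

/-- There exists a Butson-type complex Hadamard matrix `BH(19,6)`: a `19 × 19`
complex matrix all of whose entries are sixth roots of unity, satisfying
`H * Hᴴ = 19 • I`. -/
theorem exists_BH_19_6 :
    ∃ H : Matrix (Fin 19) (Fin 19) ℂ,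
      (∀ i j, (H i j) ^ 6 = 1) ∧ H * Hᴴ = (19 : ℂ) • (1 : Matrix (Fin 19) (Fin 19) ℂ) := by
  refine ⟨Matrix.of fun i j => om ^ Etbl i j, fun i j => ?_, ?_⟩
  · simp only [Matrix.of_apply]
    rw [← pow_mul, mul_comm, pow_mul, om_six, one_pow]
  · ext i j
    rw [Matrix.mul_apply, Matrix.smul_apply, Matrix.one_apply]
    have hterm : ∀ k : Fin 19,
        (Matrix.of fun i j => om ^ Etbl i j) i k *
          ((Matrix.of fun i j => om ^ Etbl i j)ᴴ) k j =
        phi (emul (M i k) (estar (M j k))) := by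
      intro k
      rw [phi_mul, phi_star, Matrix.conjTranspose_apply]
      simp only [M, phi_P, Matrix.of_apply]
      rfl
    rw [Finset.sum_congr rfl fun k _ => hterm k, ← map_sum, key i j]
    by_cases h : i = j <;> simp [h, phi_apply]
end

section
/- Let s be a positive integer, let K be a complex Hadamard matrix of order s+1 that is normalized (all entries of its first row equal 1), and let T be the s×(s+1) matrix consisting of the s noninitial rows of K. Let X, Y be s×s complex matrices and D an (s+1)×(s+1) complex matrix, all with unimodular entries. Then the system of equations (i) 2 T* T + D D* = (3s+1) I_{s+1}, (ii) X X* + Y Y* + T T* = (3s+1) I_s, (iii) (X + Y) T + T D* = 0, (iv) X Y* + Y X* + T T* = 0 holds if and only if the following system holds: (I) D D* = D* D = (s−1) I_{s+1} + 2 J_{s+1}; (II) D J_{s+1} = J_{s+1} D; (III) X + Y = −(1/(s+1)) T D* T*; (IV) (X − Y)(X − Y)* = (3s+1) I_s, where J_{s+1} denotes the all-ones matrix of order s+1. -/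
open Matrix

/-- The `m × m` all-ones matrix. -/
def allOnes (m : ℕ) : Matrix (Fin m) (Fin m) ℂ := Matrix.of fun _ _ => 1

/-!
Write `J = allOnes (s + 1)`. The rows `T` of `K` below the first satisfy `T Tᴴ = (s+1) I`,
`Tᴴ T = (s+1) I - J` and `T J = 0`.

Forward: (i) is (I) for `D Dᴴ`. Multiplying (iii) by `J` gives `T Dᴴ J = 0`, and then
`(s+1) Dᴴ J = (Tᴴ T + J) Dᴴ J = J Dᴴ J` is a multiple `λ J` of `J`. Since `D Dᴴ J = (3s+1) J`,
this forces `D J = J D = λ̄ J` with `|λ|² = 3s+1`, which is (II). With these relations the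
Hermitian matrix `M = Dᴴ D - D Dᴴ` satisfies `M² = -(s-1) M`; as `tr M = 0`, also
`tr (M Mᴴ) = 0`, so `M = 0`, the second half of (I). Multiplying (iii) by `Tᴴ` gives (III),
and (IV) is (ii) minus (iv).

Backward: by (II) and `T J = 0`, `T Dᴴ Tᴴ T = (s+1) T Dᴴ`, so (III) gives back (iii), and with
(I) it gives `(X+Y)(X+Y)ᴴ = (s-1) I`. Together with (IV), the expansions of `(X ± Y)(X ± Y)ᴴ`
recover (ii) and (iv).
-/

namespace Matrix

variable {ι κ 𝕜 : Type*} [Fintype ι] [Fintype κ]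

theorem mul_eq_smul_one_comm [DecidableEq ι] [Field 𝕜] {A B : Matrix ι ι 𝕜} {c : 𝕜}
    (hc : c ≠ 0) (h : A * B = c • 1) : B * A = c • 1 := by
  have hB : A * (c⁻¹ • B) = 1 := by
    rw [Matrix.mul_smul, h, smul_smul, inv_mul_cancel₀ hc, one_smul]
  rw [← inv_smul_eq_iff₀ hc, ← Matrix.smul_mul, mul_eq_one_comm.mp hB]

open scoped ComplexOrder in
theorem IsHermitian.eq_zero_of_mul_self_eq_smul [RCLike 𝕜] {M : Matrix ι ι 𝕜}
    (hM : M.IsHermitian) {c : 𝕜} (h : M * M = c • M) (htr : M.trace = 0) : M = 0 :=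
  trace_mul_conjTranspose_self_eq_zero_iff.mp (by rw [hM.eq, h, trace_smul, htr, smul_zero])

theorem add_mul_conjTranspose_add [Ring 𝕜] [StarRing 𝕜] (X Y : Matrix ι ι 𝕜) :
    (X + Y) * (X + Y)ᴴ = X * Xᴴ + Y * Yᴴ + (X * Yᴴ + Y * Xᴴ) := by
  simp only [conjTranspose_add, Matrix.add_mul, Matrix.mul_add]
  abel

theorem sub_mul_conjTranspose_sub [Ring 𝕜] [StarRing 𝕜] (X Y : Matrix ι ι 𝕜) :
    (X - Y) * (X - Y)ᴴ = X * Xᴴ + Y * Yᴴ - (X * Yᴴ + Y * Xᴴ) := by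
  simp only [conjTranspose_sub, Matrix.sub_mul, Matrix.mul_sub]
  abel

theorem eq_neg_smul_of_mul_add_mul_eq_zero [DecidableEq ι] {T : Matrix ι κ ℂ} {c : ℂ}
    (hc : c ≠ 0) (hTT : T * Tᴴ = c • 1) {Z : Matrix ι ι ℂ} {E : Matrix κ κ ℂ}
    (h : Z * T + T * E = 0) : Z = -(c⁻¹ • (T * E * Tᴴ)) :=
  calc Z = c⁻¹ • (Z * (T * Tᴴ)) := by
        rw [hTT, Matrix.mul_smul, Matrix.mul_one, smul_smul, inv_mul_cancel₀ hc, one_smul]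
    _ = c⁻¹ • ((Z * T + T * E) * Tᴴ - T * E * Tᴴ) := by
        rw [Matrix.add_mul, add_sub_cancel_right, Matrix.mul_assoc]
    _ = -(c⁻¹ • (T * E * Tᴴ)) := by rw [h, Matrix.zero_mul, zero_sub, smul_neg]

end Matrix

section allOnes

variable {m : ℕ}

theorem allOnes_conjTranspose : (allOnes m)ᴴ = allOnes m := by
  ext i j
  simp [allOnes]

theorem allOnes_mul_allOnes : allOnes m * allOnes m = (m : ℂ) • allOnes m := by
  ext i j
  simp [allOnes, mul_apply]

theorem allOnes_mul_mul_allOnes (A : Matrix (Fin m) (Fin m) ℂ) :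
    allOnes m * A * allOnes m = (∑ i, ∑ j, A i j) • allOnes m := by
  ext i j
  simp [allOnes, mul_apply, Finset.sum_comm (γ := Fin m)]

theorem smul_allOnes_inj [NeZero m] {a b : ℂ} : a • allOnes m = b • allOnes m ↔ a = b :=
  ⟨fun h => by simpa [allOnes] using congrFun (congrFun h 0) 0, fun h => h ▸ rfl⟩

theorem allOnes_mul_eq_star_smul {A : Matrix (Fin m) (Fin m) ℂ} {a : ℂ}
    (h : Aᴴ * allOnes m = a • allOnes m) : allOnes m * A = star a • allOnes m := by
  simpa [conjTranspose_mul, allOnes_conjTranspose] using congrArg conjTranspose h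

theorem mul_allOnes_eq_star_smul [NeZero m] {D : Matrix (Fin m) (Fin m) ℂ} {a c : ℂ}
    (hc : c ≠ 0) (hN : D * Dᴴ * allOnes m = c • allOnes m)
    (ha : Dᴴ * allOnes m = a • allOnes m) :
    D * allOnes m = star a • allOnes m ∧ a * star a = c := by
  have hDJ : a • (D * allOnes m) = c • allOnes m := by
    rw [← hN, Matrix.mul_assoc, ha, Matrix.mul_smul]
  have ha0 : a ≠ 0 := by
    rintro rfl
    exact hc (smul_allOnes_inj.mp (by rw [← hDJ, zero_smul, zero_smul])).symm
  have hJDJ := congrArg (allOnes m * ·) hDJ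
  simp only [Matrix.mul_smul, ← Matrix.mul_assoc, allOnes_mul_eq_star_smul ha, Matrix.smul_mul,
    allOnes_mul_allOnes, smul_smul] at hJDJ
  have hc' : a * star a = c :=
    mul_right_cancel₀ (Nat.cast_ne_zero.mpr (NeZero.ne m))
      (by linear_combination smul_allOnes_inj.mp hJDJ)
  refine ⟨?_, hc'⟩
  rw [← hc', mul_smul] at hDJ
  exact smul_right_injective _ ha0 hDJ

end allOnes

section tail

variable {s : ℕ} {K : Matrix (Fin (s + 1)) (Fin (s + 1)) ℂ} {T : Matrix (Fin s) (Fin (s + 1)) ℂ}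

theorem tail_mul_conjTranspose_tail (hK : K * Kᴴ = ((s : ℂ) + 1) • 1)
    (hT : ∀ i j, T i j = K i.succ j) : T * Tᴴ = ((s : ℂ) + 1) • 1 := by
  ext i j
  simpa [mul_apply, hT, one_apply] using congrFun (congrFun hK i.succ) j.succ

theorem tail_mul_allOnes (hK : K * Kᴴ = ((s : ℂ) + 1) • 1) (hK0 : ∀ j, K 0 j = 1)
    (hT : ∀ i j, T i j = K i.succ j) : T * allOnes (s + 1) = 0 := by
  ext i j
  simpa [mul_apply, hT, hK0, allOnes, one_apply, Fin.succ_ne_zero] using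
    congrFun (congrFun hK i.succ) 0

theorem conjTranspose_tail_mul_tail (hK : K * Kᴴ = ((s : ℂ) + 1) • 1) (hK0 : ∀ j, K 0 j = 1)
    (hT : ∀ i j, T i j = K i.succ j) : Tᴴ * T = ((s : ℂ) + 1) • 1 - allOnes (s + 1) := by
  have hKK := mul_eq_smul_one_comm (by exact_mod_cast s.succ_ne_zero) hK
  ext i j
  have hij := congrFun (congrFun hKK i) j
  rw [mul_apply, Fin.sum_univ_succ] at hij
  simp only [conjTranspose_apply, hK0, star_one, one_mul] at hij
  simp only [mul_apply, conjTranspose_apply, Matrix.sub_apply, hT, allOnes, of_apply]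
  linear_combination hij

end tail

section system

variable {s : ℕ} {ι : Type*} [Fintype ι]

theorem exists_mul_allOnes_eq_smul {T : Matrix ι (Fin (s + 1)) ℂ}
    (hT : Tᴴ * T = ((s : ℂ) + 1) • 1 - allOnes (s + 1))
    {A : Matrix (Fin (s + 1)) (Fin (s + 1)) ℂ} (h : T * A * allOnes (s + 1) = 0) :
    ∃ a : ℂ, A * allOnes (s + 1) = a • allOnes (s + 1) := by
  refine ⟨((s : ℂ) + 1)⁻¹ * ∑ i, ∑ j, A i j, ?_⟩
  have key : ((s : ℂ) + 1) • (A * allOnes (s + 1)) = (∑ i, ∑ j, A i j) • allOnes (s + 1) :=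
    calc ((s : ℂ) + 1) • (A * allOnes (s + 1))
        = (Tᴴ * T + allOnes (s + 1)) * (A * allOnes (s + 1)) := by
          rw [hT, sub_add_cancel, Matrix.smul_mul, Matrix.one_mul]
      _ = Tᴴ * (T * A * allOnes (s + 1)) + allOnes (s + 1) * A * allOnes (s + 1) := by
          simp only [Matrix.add_mul, Matrix.mul_assoc]
      _ = (∑ i, ∑ j, A i j) • allOnes (s + 1) := by
          rw [h, Matrix.mul_zero, zero_add, allOnes_mul_mul_allOnes]
  rw [mul_smul, ← key, smul_smul, inv_mul_cancel₀ (by exact_mod_cast s.succ_ne_zero), one_smul]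

theorem conjTranspose_mul_self_eq_of_mul_conjTranspose_self_eq
    {D : Matrix (Fin (s + 1)) (Fin (s + 1)) ℂ} {a : ℂ}
    (hN : D * Dᴴ = ((s : ℂ) - 1) • 1 + (2 : ℂ) • allOnes (s + 1))
    (ha : Dᴴ * allOnes (s + 1) = a • allOnes (s + 1))
    (hDJ : D * allOnes (s + 1) = star a • allOnes (s + 1)) (hc : a * star a = 3 * s + 1) :
    Dᴴ * D = ((s : ℂ) - 1) • 1 + (2 : ℂ) • allOnes (s + 1) := by
  have hJD := allOnes_mul_eq_star_smul ha
  have hJDh : allOnes (s + 1) * Dᴴ = a • allOnes (s + 1) := by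
    rw [← star_star a]
    exact allOnes_mul_eq_star_smul (by rwa [conjTranspose_conjTranspose])
  set J := allOnes (s + 1)
  have hDJD : Dᴴ * J * D = ((3 : ℂ) * s + 1) • J := by
    rw [ha, Matrix.smul_mul, hJD, smul_smul, hc]
  have hPJ : Dᴴ * D * J = ((3 : ℂ) * s + 1) • J := by
    rw [Matrix.mul_assoc, hDJ, Matrix.mul_smul, ha, smul_smul, mul_comm, hc]
  have hJP : J * (Dᴴ * D) = ((3 : ℂ) * s + 1) • J := by
    rw [← Matrix.mul_assoc, hJDh, Matrix.smul_mul, hJD, smul_smul, hc]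
  have hPP : Dᴴ * D * (Dᴴ * D) = ((s : ℂ) - 1) • (Dᴴ * D) + (2 : ℂ) • (Dᴴ * J * D) := by
    rw [show Dᴴ * D * (Dᴴ * D) = Dᴴ * (D * Dᴴ) * D by simp only [Matrix.mul_assoc], hN]
    simp only [Matrix.mul_add, Matrix.add_mul, Matrix.mul_smul, Matrix.smul_mul, Matrix.mul_one]
  have hJJ : J * J = ((s : ℂ) + 1) • J := by
    rw [allOnes_mul_allOnes]
    push_cast
    rfl
  have hsq : (Dᴴ * D - D * Dᴴ) * (Dᴴ * D - D * Dᴴ) = (-((s : ℂ) - 1)) • (Dᴴ * D - D * Dᴴ) := by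
    rw [hN]
    simp only [Matrix.sub_mul, Matrix.mul_sub, Matrix.add_mul, Matrix.mul_add, Matrix.smul_mul,
      Matrix.mul_smul, Matrix.one_mul, Matrix.mul_one]
    rw [hPP, hDJD, hPJ, hJP, hJJ]
    module
  have hzero := ((isHermitian_conjTranspose_mul_self D).sub
    (isHermitian_mul_conjTranspose_self D)).eq_zero_of_mul_self_eq_smul hsq
    (by rw [trace_sub, trace_mul_comm, sub_self])
  rw [← hN]
  exact sub_eq_zero.mp hzero

theorem conjTranspose_mul_self_eq_and_commute_allOnes
    {T : Matrix ι (Fin (s + 1)) ℂ} {D : Matrix (Fin (s + 1)) (Fin (s + 1)) ℂ}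
    (hT : Tᴴ * T = ((s : ℂ) + 1) • 1 - allOnes (s + 1))
    (hN : D * Dᴴ = ((s : ℂ) - 1) • 1 + (2 : ℂ) • allOnes (s + 1))
    (hTD : T * Dᴴ * allOnes (s + 1) = 0) :
    Dᴴ * D = ((s : ℂ) - 1) • 1 + (2 : ℂ) • allOnes (s + 1) ∧
      D * allOnes (s + 1) = allOnes (s + 1) * D := by
  obtain ⟨a, ha⟩ := exists_mul_allOnes_eq_smul hT hTD
  have hNJ : D * Dᴴ * allOnes (s + 1) = ((3 : ℂ) * s + 1) • allOnes (s + 1) := by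
    rw [hN, Matrix.add_mul, Matrix.smul_mul, Matrix.smul_mul, Matrix.one_mul, allOnes_mul_allOnes]
    push_cast
    module
  obtain ⟨hDJ, hc⟩ := mul_allOnes_eq_star_smul (by exact_mod_cast (3 * s).succ_ne_zero) hNJ ha
  exact ⟨conjTranspose_mul_self_eq_of_mul_conjTranspose_self_eq hN ha hDJ hc,
    by rw [hDJ, allOnes_mul_eq_star_smul ha]⟩

theorem tail_mul_mul_conjTranspose_mul_tail {T : Matrix ι (Fin (s + 1)) ℂ}
    (hT : Tᴴ * T = ((s : ℂ) + 1) • 1 - allOnes (s + 1)) (hTJ : T * allOnes (s + 1) = 0)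
    {E : Matrix (Fin (s + 1)) (Fin (s + 1)) ℂ} (hE : E * allOnes (s + 1) = allOnes (s + 1) * E) :
    T * E * Tᴴ * T = ((s : ℂ) + 1) • (T * E) := by
  rw [Matrix.mul_assoc (T * E), hT, Matrix.mul_sub, Matrix.mul_smul, Matrix.mul_one,
    Matrix.mul_assoc T, hE, ← Matrix.mul_assoc, hTJ, Matrix.zero_mul, sub_zero]

theorem mul_tail_add_tail_mul_eq_zero {T : Matrix ι (Fin (s + 1)) ℂ}
    (hT : Tᴴ * T = ((s : ℂ) + 1) • 1 - allOnes (s + 1)) (hTJ : T * allOnes (s + 1) = 0)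
    {E : Matrix (Fin (s + 1)) (Fin (s + 1)) ℂ} (hE : E * allOnes (s + 1) = allOnes (s + 1) * E)
    {Z : Matrix ι ι ℂ} (hZ : Z = -(((s : ℂ) + 1)⁻¹ • (T * E * Tᴴ))) : Z * T + T * E = 0 := by
  rw [hZ, Matrix.neg_mul, Matrix.smul_mul, tail_mul_mul_conjTranspose_mul_tail hT hTJ hE,
    smul_smul, inv_mul_cancel₀ (by exact_mod_cast s.succ_ne_zero), one_smul, neg_add_cancel]

theorem mul_conjTranspose_self_eq_of_eq_neg_smul [DecidableEq ι] {T : Matrix ι (Fin (s + 1)) ℂ}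
    (hTT : T * Tᴴ = ((s : ℂ) + 1) • 1) (hT : Tᴴ * T = ((s : ℂ) + 1) • 1 - allOnes (s + 1))
    (hTJ : T * allOnes (s + 1) = 0) {D : Matrix (Fin (s + 1)) (Fin (s + 1)) ℂ}
    (hDD : Dᴴ * D = ((s : ℂ) - 1) • 1 + (2 : ℂ) • allOnes (s + 1))
    (hDJ : Dᴴ * allOnes (s + 1) = allOnes (s + 1) * Dᴴ) {Z : Matrix ι ι ℂ}
    (hZ : Z = -(((s : ℂ) + 1)⁻¹ • (T * Dᴴ * Tᴴ))) : Z * Zᴴ = ((s : ℂ) - 1) • 1 := by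
  have key : T * Dᴴ * Tᴴ * (T * Dᴴ * Tᴴ)ᴴ =
      (((s : ℂ) + 1) * (((s : ℂ) - 1) * ((s : ℂ) + 1))) • 1 :=
    calc T * Dᴴ * Tᴴ * (T * Dᴴ * Tᴴ)ᴴ = T * Dᴴ * Tᴴ * T * D * Tᴴ := by
          simp only [conjTranspose_mul, conjTranspose_conjTranspose, Matrix.mul_assoc]
      _ = ((s : ℂ) + 1) • (T * (Dᴴ * D) * Tᴴ) := by
          rw [tail_mul_mul_conjTranspose_mul_tail hT hTJ hDJ, Matrix.smul_mul, Matrix.smul_mul,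
            Matrix.mul_assoc T Dᴴ D]
      _ = _ := by
          simp only [hDD, Matrix.mul_add, Matrix.mul_smul, Matrix.smul_mul, Matrix.mul_one, hTJ,
            hTT, smul_zero, add_zero, smul_smul]
  have hstar : star ((s : ℂ) + 1)⁻¹ = ((s : ℂ) + 1)⁻¹ := by simp
  have hs : (s : ℂ) + 1 ≠ 0 := by exact_mod_cast s.succ_ne_zero
  subst hZ
  rw [conjTranspose_neg, neg_mul_neg, conjTranspose_smul, hstar, Matrix.smul_mul,
    Matrix.mul_smul, key, smul_smul, smul_smul]
  congr 1
  field_simp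

end system

theorem petrescu_system_equiv_general (s : ℕ)
    (K : Matrix (Fin (s + 1)) (Fin (s + 1)) ℂ)
    (hKhad : K * Kᴴ = ((s + 1 : ℕ) : ℂ) • 1)
    (hKnorm : ∀ j, K 0 j = 1)
    (T : Matrix (Fin s) (Fin (s + 1)) ℂ)
    (hT : ∀ (i : Fin s) (j : Fin (s + 1)), T i j = K i.succ j)
    (X Y : Matrix (Fin s) (Fin s) ℂ)
    (D : Matrix (Fin (s + 1)) (Fin (s + 1)) ℂ) :
    ((2 : ℂ) • (Tᴴ * T) + D * Dᴴ = ((3 * s + 1 : ℕ) : ℂ) • 1 ∧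
      X * Xᴴ + Y * Yᴴ + T * Tᴴ = ((3 * s + 1 : ℕ) : ℂ) • 1 ∧
      (X + Y) * T + T * Dᴴ = 0 ∧
      X * Yᴴ + Y * Xᴴ + T * Tᴴ = 0) ↔
    ((D * Dᴴ = ((s : ℂ) - 1) • 1 + (2 : ℂ) • allOnes (s + 1) ∧
        Dᴴ * D = ((s : ℂ) - 1) • 1 + (2 : ℂ) • allOnes (s + 1)) ∧
      D * allOnes (s + 1) = allOnes (s + 1) * D ∧
      X + Y = -(((s : ℂ) + 1)⁻¹ • (T * Dᴴ * Tᴴ)) ∧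
      (X - Y) * (X - Y)ᴴ = ((3 * s + 1 : ℕ) : ℂ) • 1) := by
  push_cast at hKhad ⊢
  have hTT := tail_mul_conjTranspose_tail hKhad hT
  have hTT' := conjTranspose_tail_mul_tail hKhad hKnorm hT
  have hTJ := tail_mul_allOnes hKhad hKnorm hT
  rw [sub_mul_conjTranspose_sub]
  constructor
  · rintro ⟨h1, h2, h3, h4⟩
    have hN : D * Dᴴ = ((s : ℂ) - 1) • 1 + (2 : ℂ) • allOnes (s + 1) := by
      rw [hTT'] at h1
      linear_combination (norm := module) h1
    have hTD : T * Dᴴ * allOnes (s + 1) = 0 := by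
      rw [← neg_eq_of_add_eq_zero_right h3, Matrix.neg_mul, Matrix.mul_assoc, hTJ,
        Matrix.mul_zero, neg_zero]
    obtain ⟨hDD, hDJ⟩ := conjTranspose_mul_self_eq_and_commute_allOnes hTT' hN hTD
    exact ⟨⟨hN, hDD⟩, hDJ,
      eq_neg_smul_of_mul_add_mul_eq_zero (by exact_mod_cast s.succ_ne_zero) hTT h3,
      by linear_combination (norm := module) h2 - h4⟩
  · rintro ⟨⟨hI1, hI2⟩, hII, hIII, hIV⟩
    have hDhJ : Dᴴ * allOnes (s + 1) = allOnes (s + 1) * Dᴴ := by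
      simpa [conjTranspose_mul, allOnes_conjTranspose] using (congrArg conjTranspose hII).symm
    have hS := mul_conjTranspose_self_eq_of_eq_neg_smul hTT hTT' hTJ hI2 hDhJ hIII
    rw [add_mul_conjTranspose_add] at hS
    refine ⟨?_, ?_, mul_tail_add_tail_mul_eq_zero hTT' hTJ hDhJ hIII, ?_⟩
    · rw [hTT', hI1]
      module
    · linear_combination (norm := module) (2 : ℂ)⁻¹ • (hS + hIV) + hTT
    · linear_combination (norm := module) (2 : ℂ)⁻¹ • (hS - hIV) + hTT

/-- For `T` the noninitial rows of a normalized complex Hadamard matrix of order `s+1`,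
and unimodular matrices `X, Y, D`, Petrescu's orthogonality system (i)–(iv) is
equivalent to the transformed system (I)–(IV). -/
theorem petrescu_system_equiv (s : ℕ) (hs : 0 < s)
    (K : Matrix (Fin (s + 1)) (Fin (s + 1)) ℂ)
    (hKuni : ∀ i j, ‖K i j‖ = 1)
    (hKhad : K * Kᴴ = ((s + 1 : ℕ) : ℂ) • 1)
    (hKnorm : ∀ j, K 0 j = 1)
    (T : Matrix (Fin s) (Fin (s + 1)) ℂ)
    (hT : ∀ (i : Fin s) (j : Fin (s + 1)), T i j = K i.succ j)
    (X Y : Matrix (Fin s) (Fin s) ℂ)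
    (D : Matrix (Fin (s + 1)) (Fin (s + 1)) ℂ)
    (hX : ∀ i j, ‖X i j‖ = 1)
    (hY : ∀ i j, ‖Y i j‖ = 1)
    (hD : ∀ i j, ‖D i j‖ = 1) :
    ((2 : ℂ) • (Tᴴ * T) + D * Dᴴ = ((3 * s + 1 : ℕ) : ℂ) • 1 ∧
      X * Xᴴ + Y * Yᴴ + T * Tᴴ = ((3 * s + 1 : ℕ) : ℂ) • 1 ∧
      (X + Y) * T + T * Dᴴ = 0 ∧
      X * Yᴴ + Y * Xᴴ + T * Tᴴ = 0) ↔
    ((D * Dᴴ = ((s : ℂ) - 1) • 1 + (2 : ℂ) • allOnes (s + 1) ∧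
        Dᴴ * D = ((s : ℂ) - 1) • 1 + (2 : ℂ) • allOnes (s + 1)) ∧
      D * allOnes (s + 1) = allOnes (s + 1) * D ∧
      X + Y = -(((s : ℂ) + 1)⁻¹ • (T * Dᴴ * Tᴴ)) ∧
      (X - Y) * (X - Y)ᴴ = ((3 * s + 1 : ℕ) : ℂ) • 1) :=
  petrescu_system_equiv_general s K hKhad hKnorm T hT X Y D
end

section
/- Let s be a positive integer, let K be a complex Hadamard matrix of order s+1 that is normalized (all entries of its first row equal 1), and let T be the s×(s+1) matrix consisting of the s noninitial rows of K. Let X, Y be s×s matrices and D an (s+1)×(s+1) matrix with unimodular entries such that the Petrescu array H = [[X, Y, T], [Y, X, T], [T*, T*, D]] is a complex Hadamard matrix of order 3s+1. Then D D* = D* D = (s−1) I_{s+1} + 2 J_{s+1}, where J_{s+1} is the all-ones matrix of order s+1; in particular D is a normal matrix. -/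
open Matrix

/-- Petrescu's array: the `(3s+1) × (3s+1)` block matrix
`[[X, Y, T], [Y, X, T], [Tᴴ, Tᴴ, D]]`. -/
def petrescuArray {s : ℕ} (X Y : Matrix (Fin s) (Fin s) ℂ)
    (T : Matrix (Fin s) (Fin (s + 1)) ℂ) (D : Matrix (Fin (s + 1)) (Fin (s + 1)) ℂ) :
    Matrix ((Fin s ⊕ Fin s) ⊕ Fin (s + 1)) ((Fin s ⊕ Fin s) ⊕ Fin (s + 1)) ℂ :=
  Matrix.fromBlocks (Matrix.fromBlocks X Y Y X) (Matrix.fromRows T T)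
    (Matrix.fromCols Tᴴ Tᴴ) D

/-!
The columns of a complex Hadamard matrix `K` of order `s+1` are orthogonal too, so deleting
its all-ones first row gives `Tᴴ T = (s+1) I - J`. Comparing the lower right blocks of
`H Hᴴ = (3s+1) I` and of `Hᴴ H = (3s+1) I` then yields
`2 Tᴴ T + D Dᴴ = 2 Tᴴ T + Dᴴ D = (3s+1) I`, and solving for `D Dᴴ` and `Dᴴ D` gives
`(s-1) I + 2 J`.
-/

namespace Matrix

variable {n R : Type*}

theorem conjTranspose_mul_self_eq_smul_one [Fintype n] [DecidableEq n] [Field R] [StarRing R]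
    {A : Matrix n n R} {c : R}
    (hc : c ≠ 0) (h : A * Aᴴ = c • 1) : Aᴴ * A = c • 1 := by
  have hinv : (c⁻¹ • Aᴴ) * A = 1 := mul_eq_one_comm.mp <| by
    rw [Matrix.mul_smul, h, smul_smul, inv_mul_cancel₀ hc, one_smul]
  rw [← hinv, Matrix.smul_mul, smul_smul, mul_inv_cancel₀ hc, one_smul]

theorem toBlocks₂₂_smul_one {l : Type*} [DecidableEq l] [DecidableEq n] [Semiring R] (c : R) :
    (c • 1 : Matrix (l ⊕ n) (l ⊕ n) R).toBlocks₂₂ = c • 1 := by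
  rw [smul_one_eq_diagonal, toBlocks₂₂_diagonal, smul_one_eq_diagonal]

theorem conjTranspose_submatrix_succ_mul_self [Fintype n] [Ring R] [StarRing R] {k : ℕ}
    (K : Matrix (Fin (k + 1)) n R) (hK : ∀ j, K 0 j = 1) :
    (K.submatrix Fin.succ id)ᴴ * K.submatrix Fin.succ id = Kᴴ * K - of fun _ _ => 1 := by
  ext i j
  simp [mul_apply, Fin.sum_univ_succ, hK]

end Matrix

section petrescuArray

variable {s : ℕ} (X Y : Matrix (Fin s) (Fin s) ℂ) (T : Matrix (Fin s) (Fin (s + 1)) ℂ)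
  (D : Matrix (Fin (s + 1)) (Fin (s + 1)) ℂ)

theorem toBlocks₂₂_petrescuArray_mul_conjTranspose :
    (petrescuArray X Y T D * (petrescuArray X Y T D)ᴴ).toBlocks₂₂ =
      2 • (Tᴴ * T) + D * Dᴴ := by
  rw [petrescuArray, fromBlocks_conjTranspose, fromBlocks_multiply, toBlocks_fromBlocks₂₂,
    conjTranspose_fromCols_eq_fromRows_conjTranspose, conjTranspose_conjTranspose,
    fromCols_mul_fromRows, two_nsmul]

theorem toBlocks₂₂_conjTranspose_petrescuArray_mul :
    ((petrescuArray X Y T D)ᴴ * petrescuArray X Y T D).toBlocks₂₂ =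
      2 • (Tᴴ * T) + Dᴴ * D := by
  rw [petrescuArray, fromBlocks_conjTranspose, fromBlocks_multiply, toBlocks_fromBlocks₂₂,
    conjTranspose_fromRows_eq_fromCols_conjTranspose, fromCols_mul_fromRows, two_nsmul]

end petrescuArray

theorem petrescu_D_biplane_general (s : ℕ)
    (K : Matrix (Fin (s + 1)) (Fin (s + 1)) ℂ)
    (hKhad : K * Kᴴ = ((s + 1 : ℕ) : ℂ) • 1)
    (hKnorm : ∀ j, K 0 j = 1)
    (T : Matrix (Fin s) (Fin (s + 1)) ℂ)
    (hT : ∀ (i : Fin s) (j : Fin (s + 1)), T i j = K i.succ j)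
    (X Y : Matrix (Fin s) (Fin s) ℂ)
    (D : Matrix (Fin (s + 1)) (Fin (s + 1)) ℂ)
    (hHhad : petrescuArray X Y T D * (petrescuArray X Y T D)ᴴ =
      ((3 * s + 1 : ℕ) : ℂ) • 1) :
    D * Dᴴ = ((s : ℂ) - 1) • 1 + (2 : ℂ) • allOnes (s + 1) ∧
      Dᴴ * D = ((s : ℂ) - 1) • 1 + (2 : ℂ) • allOnes (s + 1) ∧
      D * Dᴴ = Dᴴ * D := by
  have hcast (m : ℕ) : ((m + 1 : ℕ) : ℂ) ≠ 0 := Nat.cast_ne_zero.mpr m.succ_ne_zero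
  have hTT : Tᴴ * T = ((s + 1 : ℕ) : ℂ) • 1 - allOnes (s + 1) := by
    rw [show T = K.submatrix Fin.succ id from Matrix.ext hT,
      conjTranspose_submatrix_succ_mul_self K hKnorm,
      conjTranspose_mul_self_eq_smul_one (hcast s) hKhad]
    rfl
  have solve : ∀ M, 2 • (Tᴴ * T) + M = ((3 * s + 1 : ℕ) : ℂ) • 1 →
      M = ((s : ℂ) - 1) • 1 + (2 : ℂ) • allOnes (s + 1) := by
    intro M h
    rw [hTT] at h
    push_cast at h
    linear_combination (norm := module) h
  have hDDh := congrArg toBlocks₂₂ hHhad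
  have hDhD := congrArg toBlocks₂₂ (conjTranspose_mul_self_eq_smul_one (hcast (3 * s)) hHhad)
  rw [toBlocks₂₂_petrescuArray_mul_conjTranspose, toBlocks₂₂_smul_one] at hDDh
  rw [toBlocks₂₂_conjTranspose_petrescuArray_mul, toBlocks₂₂_smul_one] at hDhD
  exact ⟨solve _ hDDh, solve _ hDhD, (solve _ hDDh).trans (solve _ hDhD).symm⟩

/-- If Petrescu's array built from the noninitial rows `T` of a normalized complex
Hadamard matrix of order `s+1` and unimodular `X, Y, D` is a complex Hadamard
matrix of order `3s+1`, then `D Dᴴ = Dᴴ D = (s-1) I + 2 J`; in particular `D`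
is normal. -/
theorem petrescu_D_biplane (s : ℕ) (hs : 0 < s)
    (K : Matrix (Fin (s + 1)) (Fin (s + 1)) ℂ)
    (hKuni : ∀ i j, ‖K i j‖ = 1)
    (hKhad : K * Kᴴ = ((s + 1 : ℕ) : ℂ) • 1)
    (hKnorm : ∀ j, K 0 j = 1)
    (T : Matrix (Fin s) (Fin (s + 1)) ℂ)
    (hT : ∀ (i : Fin s) (j : Fin (s + 1)), T i j = K i.succ j)
    (X Y : Matrix (Fin s) (Fin s) ℂ)
    (D : Matrix (Fin (s + 1)) (Fin (s + 1)) ℂ)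
    (hX : ∀ i j, ‖X i j‖ = 1)
    (hY : ∀ i j, ‖Y i j‖ = 1)
    (hD : ∀ i j, ‖D i j‖ = 1)
    (hHuni : ∀ i j, ‖petrescuArray X Y T D i j‖ = 1)
    (hHhad : petrescuArray X Y T D * (petrescuArray X Y T D)ᴴ =
      ((3 * s + 1 : ℕ) : ℂ) • 1) :
    D * Dᴴ = ((s : ℂ) - 1) • 1 + (2 : ℂ) • allOnes (s + 1) ∧
      Dᴴ * D = ((s : ℂ) - 1) • 1 + (2 : ℂ) • allOnes (s + 1) ∧
      D * Dᴴ = Dᴴ * D :=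
  petrescu_D_biplane_general s K hKhad hKnorm T hT X Y D hHhad
end

section
/- Let s be a positive integer, let K be a complex Hadamard matrix of order s+1 that is normalized (all entries of its first row equal 1), and let T be the s×(s+1) matrix consisting of the s noninitial rows of K. Let X, Y be s×s matrices and D an (s+1)×(s+1) matrix with unimodular entries such that the Petrescu array H = [[X, Y, T], [Y, X, T], [T*, T*, D]] is a complex Hadamard matrix of order 3s+1. Then D commutes with the all-ones matrix: D J_{s+1} = J_{s+1} D; that is, D is a regular matrix (all its row sums and column sums are equal to a common value). -/
open Matrix

/-! Write `A = [[X, Y], [Y, X]]` and `B = [T; T]`, so that `H = [[A, B], [Bᴴ, D]]`. The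
off-diagonal blocks of `H Hᴴ = (3s+1) I` and of `Hᴴ H = (3s+1) I` give `D Bᴴ = -Bᴴ Aᴴ` and
`B D = -Aᴴ B`, so `D` commutes with `Bᴴ B = 2 Tᴴ T`. Because `K` is a normalized Hadamard
matrix, `Tᴴ T = Kᴴ K - J = (s+1) I - J`, hence `D` commutes with `J`. -/

namespace Matrix

theorem mul_eq_smul_one_comm_s5 {n K : Type*} [Fintype n] [DecidableEq n] [Field K]
    {M N : Matrix n n K} {c : K} (hc : c ≠ 0) (h : M * N = c • 1) : N * M = c • 1 := by
  have hinv : M * (c⁻¹ • N) = 1 := by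
    rw [Matrix.mul_smul, h, smul_smul, inv_mul_cancel₀ hc, one_smul]
  calc N * M = c • ((c⁻¹ • N) * M) := by
        rw [smul_mul, smul_smul, mul_inv_cancel₀ hc, one_smul]
    _ = c • 1 := by rw [mul_eq_one_comm.mp hinv]

theorem commute_conjTranspose_mul_self_of_fromBlocks {l m R : Type*} [Fintype l] [Fintype m]
    [DecidableEq l] [DecidableEq m] [Ring R] [StarRing R]
    {A : Matrix l l R} {B : Matrix l m R} {D : Matrix m m R} {c : R}
    (hrows : fromBlocks A B Bᴴ D * (fromBlocks A B Bᴴ D)ᴴ = c • 1)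
    (hcols : (fromBlocks A B Bᴴ D)ᴴ * fromBlocks A B Bᴴ D = c • 1) :
    Commute D (Bᴴ * B) := by
  have hone : (c • 1 : Matrix (l ⊕ m) (l ⊕ m) R) = fromBlocks (c • 1) 0 0 (c • 1) := by
    rw [← fromBlocks_one, fromBlocks_smul, smul_zero, smul_zero]
  rw [fromBlocks_conjTranspose, conjTranspose_conjTranspose, fromBlocks_multiply, hone]
    at hrows hcols
  have hDB : D * Bᴴ = -(Bᴴ * Aᴴ) :=
    eq_neg_of_add_eq_zero_right (fromBlocks_inj.mp hrows).2.2.1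
  have hBD : B * D = -(Aᴴ * B) := eq_neg_of_add_eq_zero_right (fromBlocks_inj.mp hcols).2.1
  calc D * (Bᴴ * B) = -(Bᴴ * Aᴴ * B) := by rw [← Matrix.mul_assoc, hDB, Matrix.neg_mul]
    _ = Bᴴ * B * D := by rw [Matrix.mul_assoc, Matrix.mul_assoc, hBD, Matrix.mul_neg]

theorem conjTranspose_mul_self_eq_of_row_zero_eq_one {m : ℕ} {n R : Type*} [Semiring R]
    [StarRing R] {K : Matrix (Fin (m + 1)) n R} {T : Matrix (Fin m) n R}
    (hK : ∀ j, K 0 j = 1) (hT : ∀ i j, T i j = K i.succ j) :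
    Kᴴ * K = of (fun _ _ => 1) + Tᴴ * T := by
  ext a b
  simp [mul_apply, Fin.sum_univ_succ, hK, hT]

end Matrix

theorem allOnes_mul_apply {m : ℕ} (M : Matrix (Fin m) (Fin m) ℂ) (i j : Fin m) :
    (allOnes m * M) i j = ∑ k, M k j := by
  simp [allOnes, mul_apply]

theorem mul_allOnes_apply {m : ℕ} (M : Matrix (Fin m) (Fin m) ℂ) (i j : Fin m) :
    (M * allOnes m) i j = ∑ k, M i k := by
  simp [allOnes, mul_apply]

theorem exists_rowSum_colSum_eq_of_commute_allOnes {m : ℕ}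
    {M : Matrix (Fin (m + 1)) (Fin (m + 1)) ℂ}
    (h : Commute M (allOnes (m + 1))) :
    ∃ c : ℂ, (∀ i, ∑ j, M i j = c) ∧ (∀ j, ∑ i, M i j = c) := by
  have hsum (i j) : ∑ k, M i k = ∑ k, M k j := by
    rw [← mul_allOnes_apply M i j, h.eq, allOnes_mul_apply]
  exact ⟨∑ k, M 0 k, fun i => (hsum i 0).trans (hsum 0 0).symm, fun j => (hsum 0 j).symm⟩

theorem petrescu_D_regular_general (s : ℕ)
    (K : Matrix (Fin (s + 1)) (Fin (s + 1)) ℂ)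
    (hKhad : K * Kᴴ = ((s + 1 : ℕ) : ℂ) • 1)
    (hKnorm : ∀ j, K 0 j = 1)
    (T : Matrix (Fin s) (Fin (s + 1)) ℂ)
    (hT : ∀ (i : Fin s) (j : Fin (s + 1)), T i j = K i.succ j)
    (X Y : Matrix (Fin s) (Fin s) ℂ)
    (D : Matrix (Fin (s + 1)) (Fin (s + 1)) ℂ)
    (hHhad : petrescuArray X Y T D * (petrescuArray X Y T D)ᴴ =
      ((3 * s + 1 : ℕ) : ℂ) • 1) :
    D * allOnes (s + 1) = allOnes (s + 1) * D ∧
      ∃ c : ℂ, (∀ i, ∑ j, D i j = c) ∧ (∀ j, ∑ i, D i j = c) := by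
  have hTT : Tᴴ * T = ((s + 1 : ℕ) : ℂ) • 1 - allOnes (s + 1) := by
    rw [eq_sub_iff_add_eq', ← mul_eq_smul_one_comm_s5 (Nat.cast_ne_zero.mpr s.succ_ne_zero) hKhad,
      conjTranspose_mul_self_eq_of_row_zero_eq_one hKnorm hT]
    rfl
  have hH : petrescuArray X Y T D =
      fromBlocks (fromBlocks X Y Y X) (fromRows T T) (fromRows T T)ᴴ D := by
    rw [conjTranspose_fromRows_eq_fromCols_conjTranspose]
    rfl
  rw [hH] at hHhad
  have hGram := commute_conjTranspose_mul_self_of_fromBlocks hHhad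
    (mul_eq_smul_one_comm_s5 (Nat.cast_ne_zero.mpr (3 * s).succ_ne_zero) hHhad)
  rw [conjTranspose_fromRows_eq_fromCols_conjTranspose, fromCols_mul_fromRows] at hGram
  have hDJ : Commute D (allOnes (s + 1)) := by
    rw [← two_smul ℂ, Commute.smul_right_iff₀ two_ne_zero, hTT] at hGram
    simpa only [sub_sub_cancel] using
      ((Commute.one_right D).smul_right ((s + 1 : ℕ) : ℂ)).sub_right hGram
  exact ⟨hDJ.eq, exists_rowSum_colSum_eq_of_commute_allOnes hDJ⟩

/-- If Petrescu's array built from the noninitial rows `T` of a normalized complex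
Hadamard matrix of order `s+1` and unimodular `X, Y, D` is a complex Hadamard
matrix of order `3s+1`, then `D` commutes with the all-ones matrix; that is, `D`
is regular: all its row sums and column sums equal a common value. -/
theorem petrescu_D_regular (s : ℕ) (hs : 0 < s)
    (K : Matrix (Fin (s + 1)) (Fin (s + 1)) ℂ)
    (hKuni : ∀ i j, ‖K i j‖ = 1)
    (hKhad : K * Kᴴ = ((s + 1 : ℕ) : ℂ) • 1)
    (hKnorm : ∀ j, K 0 j = 1)
    (T : Matrix (Fin s) (Fin (s + 1)) ℂ)
    (hT : ∀ (i : Fin s) (j : Fin (s + 1)), T i j = K i.succ j)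
    (X Y : Matrix (Fin s) (Fin s) ℂ)
    (D : Matrix (Fin (s + 1)) (Fin (s + 1)) ℂ)
    (hX : ∀ i j, ‖X i j‖ = 1)
    (hY : ∀ i j, ‖Y i j‖ = 1)
    (hD : ∀ i j, ‖D i j‖ = 1)
    (hHuni : ∀ i j, ‖petrescuArray X Y T D i j‖ = 1)
    (hHhad : petrescuArray X Y T D * (petrescuArray X Y T D)ᴴ =
      ((3 * s + 1 : ℕ) : ℂ) • 1) :
    D * allOnes (s + 1) = allOnes (s + 1) * D ∧
      ∃ c : ℂ, (∀ i, ∑ j, D i j = c) ∧ (∀ j, ∑ i, D i j = c) :=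
  petrescu_D_regular_general s K hKhad hKnorm T hT X Y D hHhad
end

section
/- Let s be a positive integer, let K be a complex Hadamard matrix of order s+1 that is normalized (all entries of its first row equal 1), and let T be the s×(s+1) matrix consisting of the s noninitial rows of K. Let X, Y be s×s matrices and D an (s+1)×(s+1) matrix with unimodular entries such that the Petrescu array H = [[X, Y, T], [Y, X, T], [T*, T*, D]] is a complex Hadamard matrix of order 3s+1. Then X + Y = −(1/(s+1)) T D* T*. -/
/-!
The block in row 1 and column 3 of `H Hᴴ = (3s+1) • 1` says `(X + Y) T + T Dᴴ = 0`.
The rows of `T` are rows of the Hadamard matrix `K`, so `T Tᴴ = (s+1) • 1`; multiplying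
on the right by `Tᴴ` and dividing by `s + 1` gives the formula for `X + Y`.
-/

open Matrix

section

variable {α : Type*}

theorem Matrix.submatrix_mul_conjTranspose_eq_smul_one [Semiring α] [StarRing α]
    {l m n : Type*} [Fintype n] [DecidableEq l] [DecidableEq m]
    {K : Matrix m n α} {c : α} (hK : K * Kᴴ = c • 1) {f : l → m} (hf : Function.Injective f) :
    K.submatrix f id * (K.submatrix f id)ᴴ = c • 1 := by
  rw [conjTranspose_submatrix, ← submatrix_mul _ _ _ _ _ Function.bijective_id, hK,
    submatrix_smul, Pi.smul_apply, Pi.smul_apply, submatrix_one f hf]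

theorem Matrix.eq_inv_smul_mul_conjTranspose_of_mul_eq [Field α] [StarRing α]
    {m n : Type*} [Fintype m] [Fintype n] [DecidableEq m]
    {A : Matrix m m α} {B T : Matrix m n α} {c : α} (hc : c ≠ 0)
    (hAT : A * T = B) (hT : T * Tᴴ = c • 1) :
    A = c⁻¹ • (B * Tᴴ) := by
  rw [← hAT, Matrix.mul_assoc, hT, Matrix.mul_smul, Matrix.mul_one, inv_smul_smul₀ hc]

end

section

variable {s : ℕ} (X Y : Matrix (Fin s) (Fin s) ℂ) (T : Matrix (Fin s) (Fin (s + 1)) ℂ)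
  (D : Matrix (Fin (s + 1)) (Fin (s + 1)) ℂ)

theorem petrescuArray_mul_conjTranspose_toBlocks₁₂ :
    (petrescuArray X Y T D * (petrescuArray X Y T D)ᴴ).toBlocks₁₂ =
      fromRows ((X + Y) * T + T * Dᴴ) ((Y + X) * T + T * Dᴴ) := by
  rw [petrescuArray, fromBlocks_conjTranspose, conjTranspose_fromRows_eq_fromCols_conjTranspose,
    conjTranspose_fromCols_eq_fromRows_conjTranspose, conjTranspose_conjTranspose,
    fromBlocks_multiply, toBlocks_fromBlocks₁₂, fromBlocks_mul_fromRows, fromRows_mul]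
  ext (i | i) j <;> simp [Matrix.add_mul]

theorem add_mul_eq_neg_of_petrescuArray_mul_conjTranspose_eq_smul_one {c : ℂ}
    (hH : petrescuArray X Y T D * (petrescuArray X Y T D)ᴴ = c • 1) :
    (X + Y) * T = -(T * Dᴴ) := by
  have hblock := petrescuArray_mul_conjTranspose_toBlocks₁₂ X Y T D
  rw [hH, ← fromBlocks_one, fromBlocks_smul, toBlocks_fromBlocks₁₂, smul_zero,
    ← fromRows_zero] at hblock
  exact eq_neg_of_add_eq_zero_left (fromRows_inj hblock).1.symm

end

theorem petrescu_X_add_Y_general (s : ℕ)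
    (K : Matrix (Fin (s + 1)) (Fin (s + 1)) ℂ)
    (hKhad : K * Kᴴ = ((s + 1 : ℕ) : ℂ) • 1)
    (T : Matrix (Fin s) (Fin (s + 1)) ℂ)
    (hT : ∀ (i : Fin s) (j : Fin (s + 1)), T i j = K i.succ j)
    (X Y : Matrix (Fin s) (Fin s) ℂ)
    (D : Matrix (Fin (s + 1)) (Fin (s + 1)) ℂ)
    (hHhad : petrescuArray X Y T D * (petrescuArray X Y T D)ᴴ =
      ((3 * s + 1 : ℕ) : ℂ) • 1) :
    X + Y = -(((s : ℂ) + 1)⁻¹ • (T * Dᴴ * Tᴴ)) := by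
  have hTsub : T = K.submatrix Fin.succ id := Matrix.ext hT
  have hTT : T * Tᴴ = ((s : ℂ) + 1) • 1 := by
    rw [hTsub, K.submatrix_mul_conjTranspose_eq_smul_one hKhad (Fin.succ_injective s),
      Nat.cast_succ]
  rw [eq_inv_smul_mul_conjTranspose_of_mul_eq (by exact_mod_cast s.succ_ne_zero)
    (add_mul_eq_neg_of_petrescuArray_mul_conjTranspose_eq_smul_one X Y T D hHhad) hTT,
    Matrix.neg_mul, smul_neg]

/-- If Petrescu's array built from the noninitial rows `T` of a normalized complex
Hadamard matrix of order `s+1` and unimodular `X, Y, D` is a complex Hadamard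
matrix of order `3s+1`, then `X + Y = -(1/(s+1)) T Dᴴ Tᴴ`. -/
theorem petrescu_X_add_Y (s : ℕ) (hs : 0 < s)
    (K : Matrix (Fin (s + 1)) (Fin (s + 1)) ℂ)
    (hKuni : ∀ i j, ‖K i j‖ = 1)
    (hKhad : K * Kᴴ = ((s + 1 : ℕ) : ℂ) • 1)
    (hKnorm : ∀ j, K 0 j = 1)
    (T : Matrix (Fin s) (Fin (s + 1)) ℂ)
    (hT : ∀ (i : Fin s) (j : Fin (s + 1)), T i j = K i.succ j)
    (X Y : Matrix (Fin s) (Fin s) ℂ)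
    (D : Matrix (Fin (s + 1)) (Fin (s + 1)) ℂ)
    (hX : ∀ i j, ‖X i j‖ = 1)
    (hY : ∀ i j, ‖Y i j‖ = 1)
    (hD : ∀ i j, ‖D i j‖ = 1)
    (hHuni : ∀ i j, ‖petrescuArray X Y T D i j‖ = 1)
    (hHhad : petrescuArray X Y T D * (petrescuArray X Y T D)ᴴ =
      ((3 * s + 1 : ℕ) : ℂ) • 1) :
    X + Y = -(((s : ℂ) + 1)⁻¹ • (T * Dᴴ * Tᴴ)) :=
  petrescu_X_add_Y_general s K hKhad T hT X Y D hHhad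
end

section
/- Let s be a positive integer, let K be a complex Hadamard matrix of order s+1 that is normalized (all entries of its first row equal 1), and let T be the s×(s+1) matrix consisting of the s noninitial rows of K. Let X, Y be s×s matrices and D an (s+1)×(s+1) matrix with unimodular entries such that the Petrescu array H = [[X, Y, T], [Y, X, T], [T*, T*, D]] is a complex Hadamard matrix of order 3s+1. Then (X − Y)(X − Y)* = (3s+1) I_s; that is, the difference X − Y is (a scalar multiple of) a unitary matrix. -/
open Matrix

/-!
The first two block rows `R₁ = [X Y T]` and `R₂ = [Y X T]` of a complex Hadamard matrix satisfy
`R₁ R₁ᴴ = (3s+1) I` and `R₁ R₂ᴴ = 0`. Since `R₁ - R₂ = [X - Y, Y - X, 0]`, the shared block `T`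
drops out of `R₁ (R₁ - R₂)ᴴ`, which is exactly `(X - Y)(X - Y)ᴴ`.
-/

namespace Matrix

theorem sub_mul_conjTranspose_sub_eq {m n α : Type*} [Fintype m] [Fintype n] [Ring α]
    [StarRing α] (X Y : Matrix m m α) (T : Matrix m n α) :
    (X - Y) * (X - Y)ᴴ = (X * Xᴴ + Y * Yᴴ + T * Tᴴ) - (X * Yᴴ + Y * Xᴴ + T * Tᴴ) := by
  rw [conjTranspose_sub]
  noncomm_ring

theorem smul_one_eq_fromBlocks {l m α : Type*} [DecidableEq l] [DecidableEq m] [Semiring α]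
    (c : α) : (c • 1 : Matrix (l ⊕ m) (l ⊕ m) α) = fromBlocks (c • 1) 0 0 (c • 1) := by
  rw [← fromBlocks_one, fromBlocks_smul, smul_zero, smul_zero]

end Matrix

theorem toBlocks₁₁_petrescuArray_mul_conjTranspose {s : ℕ} (X Y : Matrix (Fin s) (Fin s) ℂ)
    (T : Matrix (Fin s) (Fin (s + 1)) ℂ) (D : Matrix (Fin (s + 1)) (Fin (s + 1)) ℂ) :
    (petrescuArray X Y T D * (petrescuArray X Y T D)ᴴ).toBlocks₁₁ =
      fromBlocks (X * Xᴴ + Y * Yᴴ + T * Tᴴ) (X * Yᴴ + Y * Xᴴ + T * Tᴴ)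
        (Y * Xᴴ + X * Yᴴ + T * Tᴴ) (Y * Yᴴ + X * Xᴴ + T * Tᴴ) := by
  simp only [petrescuArray, fromBlocks_conjTranspose, fromBlocks_multiply, toBlocks_fromBlocks₁₁,
    conjTranspose_fromRows_eq_fromCols_conjTranspose, fromRows_mul_fromCols, fromBlocks_add]

theorem petrescu_X_sub_Y_general (s : ℕ)
    (T : Matrix (Fin s) (Fin (s + 1)) ℂ)
    (X Y : Matrix (Fin s) (Fin s) ℂ)
    (D : Matrix (Fin (s + 1)) (Fin (s + 1)) ℂ)
    (hHhad : petrescuArray X Y T D * (petrescuArray X Y T D)ᴴ =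
      ((3 * s + 1 : ℕ) : ℂ) • 1) :
    (X - Y) * (X - Y)ᴴ = ((3 * s + 1 : ℕ) : ℂ) • 1 := by
  have hGram := congrArg toBlocks₁₁ hHhad
  rw [toBlocks₁₁_petrescuArray_mul_conjTranspose, smul_one_eq_fromBlocks, toBlocks_fromBlocks₁₁,
    smul_one_eq_fromBlocks, fromBlocks_inj] at hGram
  obtain ⟨hFirstRow, hOrthogonal, -, -⟩ := hGram
  rw [sub_mul_conjTranspose_sub_eq X Y T, hFirstRow, hOrthogonal, sub_zero]

/-- If Petrescu's array built from the noninitial rows `T` of a normalized complex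
Hadamard matrix of order `s+1` and unimodular `X, Y, D` is a complex Hadamard
matrix of order `3s+1`, then `(X - Y)(X - Y)ᴴ = (3s+1) I`, i.e. `X - Y` is a
scalar multiple of a unitary matrix. -/
theorem petrescu_X_sub_Y (s : ℕ) (hs : 0 < s)
    (K : Matrix (Fin (s + 1)) (Fin (s + 1)) ℂ)
    (hKuni : ∀ i j, ‖K i j‖ = 1)
    (hKhad : K * Kᴴ = ((s + 1 : ℕ) : ℂ) • 1)
    (hKnorm : ∀ j, K 0 j = 1)
    (T : Matrix (Fin s) (Fin (s + 1)) ℂ)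
    (hT : ∀ (i : Fin s) (j : Fin (s + 1)), T i j = K i.succ j)
    (X Y : Matrix (Fin s) (Fin s) ℂ)
    (D : Matrix (Fin (s + 1)) (Fin (s + 1)) ℂ)
    (hX : ∀ i j, ‖X i j‖ = 1)
    (hY : ∀ i j, ‖Y i j‖ = 1)
    (hD : ∀ i j, ‖D i j‖ = 1)
    (hHuni : ∀ i j, ‖petrescuArray X Y T D i j‖ = 1)
    (hHhad : petrescuArray X Y T D * (petrescuArray X Y T D)ᴴ =
      ((3 * s + 1 : ℕ) : ℂ) • 1) :
    (X - Y) * (X - Y)ᴴ = ((3 * s + 1 : ℕ) : ℂ) • 1 :=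
  petrescu_X_sub_Y_general s T X Y D hHhad
end

section
/- Let s be a positive integer, let K be a complex Hadamard matrix of order s+1 that is normalized (all entries of its first row equal 1), and let T be the s×(s+1) matrix consisting of the s noninitial rows of K. Let X, Y be s×s matrices and D an (s+1)×(s+1) matrix, all with unimodular entries, and suppose that: (I) D D* = D* D = (s−1) I_{s+1} + 2 J_{s+1}; (II) D J_{s+1} = J_{s+1} D; (III) X + Y = −(1/(s+1)) T D* T*; (IV) (X − Y)(X − Y)* = (3s+1) I_s. Then the Petrescu array H = [[X, Y, T], [Y, X, T], [T*, T*, D]] is a complex Hadamard matrix of order 3s+1. -/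
open Matrix

/-! The proof is block arithmetic. Deleting the all-ones first row of the normalized Hadamard
matrix `K` leaves `T` with `T Tᴴ = (s+1) I`, `Tᴴ T = (s+1) I - J` and `T J = 0`. Feeding these
and (I), (II) into (III) gives `(X + Y) T = -T Dᴴ` and `(X + Y)(X + Y)ᴴ = (s-1) I`; together
with (IV), polarization yields `X Xᴴ + Y Yᴴ = 2s I` and `X Yᴴ + Y Xᴴ = -(s+1) I`. These are
exactly the identities that make each block of `H Hᴴ` equal to the corresponding block of
`(3s+1) I`. -/

section Polarization

variable {m n R : Type*} [Fintype n] [Ring R] [StarRing R]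

theorem add_mul_conjTranspose_add_add_sub_mul_conjTranspose_sub (X Y : Matrix m n R) :
    (X + Y) * (X + Y)ᴴ + (X - Y) * (X - Y)ᴴ = (2 : R) • (X * Xᴴ + Y * Yᴴ) := by
  simp only [conjTranspose_add, conjTranspose_sub, Matrix.add_mul, Matrix.mul_add,
    Matrix.sub_mul, Matrix.mul_sub, two_smul]
  abel

theorem add_mul_conjTranspose_add_sub_sub_mul_conjTranspose_sub (X Y : Matrix m n R) :
    (X + Y) * (X + Y)ᴴ - (X - Y) * (X - Y)ᴴ = (2 : R) • (X * Yᴴ + Y * Xᴴ) := by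
  simp only [conjTranspose_add, conjTranspose_sub, Matrix.add_mul, Matrix.mul_add,
    Matrix.sub_mul, Matrix.mul_sub, two_smul]
  abel

end Polarization

theorem conjTranspose_mul_self_eq_smul_one_of_mul_conjTranspose {n 𝕜 : Type*} [Fintype n]
    [DecidableEq n] [Field 𝕜] [StarRing 𝕜] {A : Matrix n n 𝕜} {c : 𝕜} (hc : c ≠ 0)
    (hA : A * Aᴴ = c • 1) : Aᴴ * A = c • 1 := by
  have hinv : (c⁻¹ • Aᴴ) * A = 1 :=
    mul_eq_one_comm.mp (by rw [Matrix.mul_smul, hA, smul_smul, inv_mul_cancel₀ hc, one_smul])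
  rw [Matrix.smul_mul] at hinv
  rw [← hinv, smul_smul, mul_inv_cancel₀ hc, one_smul]

section NormalizedHadamard

variable {n : ℕ} {K : Matrix (Fin (n + 1)) (Fin (n + 1)) ℂ}
  {T : Matrix (Fin n) (Fin (n + 1)) ℂ}

theorem mul_conjTranspose_self_of_rows_succ (hK : K * Kᴴ = ((n + 1 : ℕ) : ℂ) • 1)
    (hT : ∀ i j, T i j = K i.succ j) : T * Tᴴ = ((n : ℂ) + 1) • 1 := by
  ext i j
  have hij := congrFun₂ hK i.succ j.succ
  simp only [mul_apply, conjTranspose_apply, Matrix.smul_apply, one_apply,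
    Fin.succ_inj, Nat.cast_succ] at hij ⊢
  simpa only [hT] using hij

theorem mul_allOnes_of_rows_succ (hK : K * Kᴴ = ((n + 1 : ℕ) : ℂ) • 1)
    (hK0 : ∀ j, K 0 j = 1) (hT : ∀ i j, T i j = K i.succ j) : T * allOnes (n + 1) = 0 := by
  ext i j
  have hi0 := congrFun₂ hK i.succ 0
  simp only [mul_apply, conjTranspose_apply, Matrix.smul_apply, one_apply, hK0, star_one,
    mul_one, Fin.succ_ne_zero, if_false, smul_zero] at hi0
  simpa [mul_apply, allOnes, hT] using hi0

theorem conjTranspose_mul_self_of_rows_succ (hK : K * Kᴴ = ((n + 1 : ℕ) : ℂ) • 1)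
    (hK0 : ∀ j, K 0 j = 1) (hT : ∀ i j, T i j = K i.succ j) :
    Tᴴ * T = ((n : ℂ) + 1) • 1 - allOnes (n + 1) := by
  have hKK := conjTranspose_mul_self_eq_smul_one_of_mul_conjTranspose
    (Nat.cast_ne_zero.mpr n.succ_ne_zero) hK
  ext j k
  -- The first row of `K` contributes the all-ones matrix to `Kᴴ K`.
  have hjk := congrFun₂ hKK j k
  simp only [mul_apply, conjTranspose_apply, Fin.sum_univ_succ, hK0, star_one, one_mul,
    Matrix.smul_apply, Nat.cast_succ] at hjk
  simp only [mul_apply, conjTranspose_apply, Matrix.sub_apply, Matrix.smul_apply, one_apply,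
    allOnes, of_apply, hT] at hjk ⊢
  linear_combination hjk

end NormalizedHadamard

section Petrescu

variable {s : ℕ} {X Y : Matrix (Fin s) (Fin s) ℂ} {T : Matrix (Fin s) (Fin (s + 1)) ℂ}
  {D : Matrix (Fin (s + 1)) (Fin (s + 1)) ℂ}

theorem add_mul_eq_neg_mul_conjTranspose
    (hTtT : Tᴴ * T = ((s : ℂ) + 1) • 1 - allOnes (s + 1)) (hTJ : T * allOnes (s + 1) = 0)
    (hDJ : D * allOnes (s + 1) = allOnes (s + 1) * D)
    (hXY : X + Y = -(((s : ℂ) + 1)⁻¹ • (T * Dᴴ * Tᴴ))) :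
    (X + Y) * T = -(T * Dᴴ) := by
  have hJ : (allOnes (s + 1))ᴴ = allOnes (s + 1) := by
    ext; simp [allOnes]
  have hTDJ : T * Dᴴ * allOnes (s + 1) = 0 := by
    have hDJ' : allOnes (s + 1) * Dᴴ = Dᴴ * allOnes (s + 1) := by
      simpa [conjTranspose_mul, hJ] using congrArg conjTranspose hDJ
    rw [Matrix.mul_assoc, ← hDJ', ← Matrix.mul_assoc, hTJ, Matrix.zero_mul]
  rw [hXY, Matrix.neg_mul, Matrix.smul_mul, Matrix.mul_assoc (T * Dᴴ), hTtT, Matrix.mul_sub,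
    hTDJ, sub_zero, Matrix.mul_smul, Matrix.mul_one, smul_smul,
    inv_mul_cancel₀ (Nat.cast_add_one_ne_zero s), one_smul]

theorem add_mul_conjTranspose_add_eq_smul_one (hTT : T * Tᴴ = ((s : ℂ) + 1) • 1)
    (hTJ : T * allOnes (s + 1) = 0)
    (hDtD : Dᴴ * D = ((s : ℂ) - 1) • 1 + (2 : ℂ) • allOnes (s + 1))
    (hXY : X + Y = -(((s : ℂ) + 1)⁻¹ • (T * Dᴴ * Tᴴ))) (hXYT : (X + Y) * T = -(T * Dᴴ)) :
    (X + Y) * (X + Y)ᴴ = ((s : ℂ) - 1) • 1 := by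
  have hXYh : (X + Y)ᴴ = -(((s : ℂ) + 1)⁻¹ • (T * D * Tᴴ)) := by
    simpa [conjTranspose_smul, Matrix.mul_assoc, map_inv₀] using congrArg conjTranspose hXY
  have hTDDT : T * (Dᴴ * D) * Tᴴ = (((s : ℂ) - 1) * ((s : ℂ) + 1)) • 1 := by
    rw [hDtD, Matrix.mul_add, Matrix.add_mul, Matrix.mul_smul, Matrix.mul_smul, hTJ, smul_zero,
      Matrix.zero_mul, add_zero, Matrix.mul_one, Matrix.smul_mul, hTT, smul_smul]
  calc (X + Y) * (X + Y)ᴴ = -(((s : ℂ) + 1)⁻¹ • ((X + Y) * T * (D * Tᴴ))) := by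
        rw [hXYh, Matrix.mul_neg, Matrix.mul_smul]; simp only [Matrix.mul_assoc]
    _ = ((s : ℂ) + 1)⁻¹ • (T * (Dᴴ * D) * Tᴴ) := by
        rw [hXYT, Matrix.neg_mul, smul_neg, neg_neg]; simp only [Matrix.mul_assoc]
    _ = ((s : ℂ) - 1) • 1 := by
        rw [hTDDT, smul_smul, mul_comm, mul_inv_cancel_right₀ (Nat.cast_add_one_ne_zero s)]

theorem norm_petrescuArray_apply (hX : ∀ i j, ‖X i j‖ = 1) (hY : ∀ i j, ‖Y i j‖ = 1)
    (hT : ∀ i j, ‖T i j‖ = 1) (hD : ∀ i j, ‖D i j‖ = 1) (i j) :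
    ‖petrescuArray X Y T D i j‖ = 1 := by
  rcases i with (i | i) | i <;> rcases j with (j | j) | j <;>
    simp [petrescuArray, hX, hY, hT, hD]

theorem petrescuArray_mul_conjTranspose_eq_smul_one {c : ℂ}
    (hdiag : X * Xᴴ + Y * Yᴴ + T * Tᴴ = c • 1) (hoff : X * Yᴴ + Y * Xᴴ + T * Tᴴ = 0)
    (hcross : (X + Y) * T = -(T * Dᴴ)) (hcorner : (2 : ℂ) • (Tᴴ * T) + D * Dᴴ = c • 1) :
    petrescuArray X Y T D * (petrescuArray X Y T D)ᴴ = c • 1 := by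
  have hXT : X * T + Y * T = -(T * Dᴴ) := by rw [← Matrix.add_mul, hcross]
  have hTX : Tᴴ * Xᴴ + Tᴴ * Yᴴ = -(D * Tᴴ) := by
    simpa [conjTranspose_mul, Matrix.mul_add] using congrArg conjTranspose hcross
  have hXX : X * Xᴴ + Y * Yᴴ = c • 1 - T * Tᴴ := eq_sub_of_add_eq hdiag
  have hXY : X * Yᴴ + Y * Xᴴ = -(T * Tᴴ) := eq_neg_of_add_eq_zero_left hoff
  rw [petrescuArray, fromBlocks_conjTranspose, conjTranspose_fromRows_eq_fromCols_conjTranspose,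
    conjTranspose_fromCols_eq_fromRows_conjTranspose, conjTranspose_conjTranspose,
    fromBlocks_multiply, fromBlocks_conjTranspose, fromBlocks_multiply, fromRows_mul_fromCols,
    fromBlocks_add, fromBlocks_mul_fromRows, fromRows_mul, fromCols_mul_fromBlocks, mul_fromCols,
    fromCols_mul_fromRows, add_comm (Y * Xᴴ), add_comm (Y * Yᴴ), add_comm (Y * T),
    add_comm (Tᴴ * Yᴴ), hXX, hXY, hXT, hTX, ← fromRows_neg, ← fromCols_neg, neg_add_cancel,
    neg_add_cancel, ← two_smul ℂ, hcorner, sub_add_cancel, neg_add_cancel, ← fromBlocks_one,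
    fromBlocks_smul, ← fromBlocks_one, fromBlocks_smul]
  simp only [smul_zero]

end Petrescu

theorem petrescuArray_hadamard_of_system_general (s : ℕ)
    (K : Matrix (Fin (s + 1)) (Fin (s + 1)) ℂ)
    (hKuni : ∀ i j, ‖K i j‖ = 1)
    (hKhad : K * Kᴴ = ((s + 1 : ℕ) : ℂ) • 1)
    (hKnorm : ∀ j, K 0 j = 1)
    (T : Matrix (Fin s) (Fin (s + 1)) ℂ)
    (hT : ∀ (i : Fin s) (j : Fin (s + 1)), T i j = K i.succ j)
    (X Y : Matrix (Fin s) (Fin s) ℂ)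
    (D : Matrix (Fin (s + 1)) (Fin (s + 1)) ℂ)
    (hX : ∀ i j, ‖X i j‖ = 1)
    (hY : ∀ i j, ‖Y i j‖ = 1)
    (hD : ∀ i j, ‖D i j‖ = 1)
    (h1 : D * Dᴴ = ((s : ℂ) - 1) • 1 + (2 : ℂ) • allOnes (s + 1))
    (h1' : Dᴴ * D = ((s : ℂ) - 1) • 1 + (2 : ℂ) • allOnes (s + 1))
    (h2 : D * allOnes (s + 1) = allOnes (s + 1) * D)
    (h3 : X + Y = -(((s : ℂ) + 1)⁻¹ • (T * Dᴴ * Tᴴ)))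
    (h4 : (X - Y) * (X - Y)ᴴ = ((3 * s + 1 : ℕ) : ℂ) • 1) :
    (∀ i j, ‖petrescuArray X Y T D i j‖ = 1) ∧
      petrescuArray X Y T D * (petrescuArray X Y T D)ᴴ = ((3 * s + 1 : ℕ) : ℂ) • 1 := by
  have hTT := mul_conjTranspose_self_of_rows_succ hKhad hT
  have hTJ := mul_allOnes_of_rows_succ hKhad hKnorm hT
  have hTtT := conjTranspose_mul_self_of_rows_succ hKhad hKnorm hT
  have hcross := add_mul_eq_neg_mul_conjTranspose hTtT hTJ h2 h3
  have hsum := add_mul_conjTranspose_add_eq_smul_one hTT hTJ h1' h3 hcross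
  have hXX : X * Xᴴ + Y * Yᴴ = (2 * s : ℂ) • 1 :=
    smul_right_injective _ (two_ne_zero (α := ℂ)) <| by
      dsimp only
      rw [← add_mul_conjTranspose_add_add_sub_mul_conjTranspose_sub, hsum, h4, ← add_smul,
        smul_smul]
      push_cast; ring_nf
  have hXY : X * Yᴴ + Y * Xᴴ = -((s : ℂ) + 1) • 1 :=
    smul_right_injective _ (two_ne_zero (α := ℂ)) <| by
      dsimp only
      rw [← add_mul_conjTranspose_add_sub_sub_mul_conjTranspose_sub, hsum, h4, ← sub_smul,
        smul_smul]
      push_cast; ring_nf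
  refine ⟨norm_petrescuArray_apply hX hY (fun i j => hT i j ▸ hKuni _ _) hD,
    petrescuArray_mul_conjTranspose_eq_smul_one ?_ ?_ hcross ?_⟩
  · rw [hXX, hTT, ← add_smul]
    push_cast; ring_nf
  · rw [hXY, hTT, ← add_smul, neg_add_cancel, zero_smul]
  · rw [hTtT, h1]
    push_cast
    module

/-- If `T` consists of the noninitial rows of a normalized complex Hadamard matrix of
order `s+1`, the matrices `X, Y, D` have unimodular entries, and conditions (I)–(IV)
hold, then Petrescu's array `[[X, Y, T], [Y, X, T], [Tᴴ, Tᴴ, D]]` is a complex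
Hadamard matrix of order `3s+1`. -/
theorem petrescuArray_hadamard_of_system (s : ℕ) (hs : 0 < s)
    (K : Matrix (Fin (s + 1)) (Fin (s + 1)) ℂ)
    (hKuni : ∀ i j, ‖K i j‖ = 1)
    (hKhad : K * Kᴴ = ((s + 1 : ℕ) : ℂ) • 1)
    (hKnorm : ∀ j, K 0 j = 1)
    (T : Matrix (Fin s) (Fin (s + 1)) ℂ)
    (hT : ∀ (i : Fin s) (j : Fin (s + 1)), T i j = K i.succ j)
    (X Y : Matrix (Fin s) (Fin s) ℂ)
    (D : Matrix (Fin (s + 1)) (Fin (s + 1)) ℂ)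
    (hX : ∀ i j, ‖X i j‖ = 1)
    (hY : ∀ i j, ‖Y i j‖ = 1)
    (hD : ∀ i j, ‖D i j‖ = 1)
    (h1 : D * Dᴴ = ((s : ℂ) - 1) • 1 + (2 : ℂ) • allOnes (s + 1))
    (h1' : Dᴴ * D = ((s : ℂ) - 1) • 1 + (2 : ℂ) • allOnes (s + 1))
    (h2 : D * allOnes (s + 1) = allOnes (s + 1) * D)
    (h3 : X + Y = -(((s : ℂ) + 1)⁻¹ • (T * Dᴴ * Tᴴ)))
    (h4 : (X - Y) * (X - Y)ᴴ = ((3 * s + 1 : ℕ) : ℂ) • 1) :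
    (∀ i j, ‖petrescuArray X Y T D i j‖ = 1) ∧
      petrescuArray X Y T D * (petrescuArray X Y T D)ᴴ = ((3 * s + 1 : ℕ) : ℂ) • 1 :=
  petrescuArray_hadamard_of_system_general s K hKuni hKhad hKnorm T hT X Y D hX hY hD h1 h1' h2 h3
    h4
end
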